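/- arXiv:1804.03752 — 2 statements merged into one kernel-verified Lean document; each statement's English description precedes it below -/
import Mathlib

section
/- If G is a triangle-free graph with n vertices and at least one edge, then √(s⁺) ≤ n/2, where s⁺ is the sum of squares of the positive adjacency eigenvalues. -/
/-!
Let `t` be the largest eigenvalue of the adjacency matrix `A`. Testing the Rayleigh quotient on
the all-ones vector gives `2m ≤ t n`, and testing it on `|v|` for a unit eigenvector `v` shows,
since `A` is entrywise nonnegative, that every eigenvalue is at least `-t`. Triangle-freeness
means `tr A³ = ∑ μᵢ³ = 0`, so `t³ ≤ ∑_{μᵢ > 0} μᵢ³ = ∑_{μᵢ ≤ 0} |μᵢ|³ ≤ t s⁻`, i.e. `t² ≤ s⁻`.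
Hence `s⁺ = 2m - s⁻ ≤ t n - t² ≤ n² / 4`.
-/

open Finset Matrix

namespace OrthonormalBasis

variable {𝕜 E ι : Type*} [RCLike 𝕜] [NormedAddCommGroup E] [InnerProductSpace 𝕜 E] [Fintype ι]

theorem inner_self_map_eq_sum (b : OrthonormalBasis ι 𝕜 E) {T : E →ₗ[𝕜] E} {μ : ι → ℝ}
    (hT : ∀ i, T (b i) = (μ i : 𝕜) • b i) (x : E) :
    inner 𝕜 x (T x) = ∑ i, (μ i : 𝕜) * ‖inner 𝕜 (b i) x‖ ^ 2 := by
  conv_lhs => arg 3; rw [← b.sum_repr' x]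
  simp only [map_sum, map_smul, hT, smul_smul, inner_sum, inner_smul_right]
  refine sum_congr rfl fun i _ => ?_
  rw [← inner_conj_symm x, ← RCLike.mul_conj]
  ring

theorem re_inner_self_map_le (b : OrthonormalBasis ι 𝕜 E) {T : E →ₗ[𝕜] E} {μ : ι → ℝ}
    (hT : ∀ i, T (b i) = (μ i : 𝕜) • b i) {t : ℝ} (ht : ∀ i, μ i ≤ t) (x : E) :
    RCLike.re (inner 𝕜 x (T x)) ≤ t * ‖x‖ ^ 2 := by
  rw [b.inner_self_map_eq_sum hT, ← b.sum_sq_norm_inner_right, mul_sum, map_sum]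
  refine sum_le_sum fun i _ => ?_
  norm_cast
  exact mul_le_mul_of_nonneg_right (ht i) (sq_nonneg _)

end OrthonormalBasis

namespace Matrix

variable {n : Type*} [Fintype n]

theorem abs_dotProduct_mulVec_le {m R : Type*} [Fintype m] [Ring R] [LinearOrder R]
    [IsStrictOrderedRing R] {A : Matrix n m R} (hA : ∀ i j, 0 ≤ A i j) (x : n → R) (y : m → R) :
    |x ⬝ᵥ (A *ᵥ y)| ≤ |x| ⬝ᵥ (A *ᵥ |y|) := by
  have hrow (i : n) : |(A *ᵥ y) i| ≤ (A *ᵥ |y|) i := by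
    refine (abs_sum_le_sum_abs _ _).trans_eq (sum_congr rfl fun j _ => ?_)
    rw [abs_mul, abs_of_nonneg (hA i j), Pi.abs_apply]
  refine (abs_sum_le_sum_abs _ _).trans (sum_le_sum fun i _ => ?_)
  rw [abs_mul, Pi.abs_apply]
  exact mul_le_mul_of_nonneg_left (hrow i) (abs_nonneg _)

namespace IsHermitian

variable [DecidableEq n]

theorem trace_pow {𝕜 : Type*} [RCLike 𝕜] {A : Matrix n n 𝕜} (hA : A.IsHermitian) (k : ℕ) :
    (A ^ k).trace = ∑ i, (hA.eigenvalues i : 𝕜) ^ k := by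
  conv_lhs => rw [hA.spectral_theorem]
  rw [← map_pow, Unitary.conjStarAlgAut_apply, trace_mul_cycle, Unitary.coe_star_mul_self,
    one_mul, diagonal_pow, trace_diagonal]
  rfl

variable {A : Matrix n n ℝ}

theorem dotProduct_mulVec_le (hA : A.IsHermitian) {t : ℝ} (ht : ∀ i, hA.eigenvalues i ≤ t)
    (x : n → ℝ) : x ⬝ᵥ (A *ᵥ x) ≤ t * (x ⬝ᵥ x) := by
  have hT (i : n) : toLpLin 2 2 A (hA.eigenvectorBasis i) =
      (hA.eigenvalues i : ℝ) • hA.eigenvectorBasis i := by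
    rw [toLpLin_apply, hA.mulVec_eigenvectorBasis]
    rfl
  have := hA.eigenvectorBasis.re_inner_self_map_le hT ht (WithLp.toLp 2 x)
  rwa [RCLike.re_to_real, sq, ← real_inner_self_eq_norm_mul_norm, toLpLin_apply,
    EuclideanSpace.inner_toLp_toLp, EuclideanSpace.inner_toLp_toLp, star_trivial,
    dotProduct_comm] at this

theorem neg_le_eigenvalues_of_nonneg (hA : A.IsHermitian) (hA0 : ∀ i j, 0 ≤ A i j) {t : ℝ}
    (ht : ∀ j, hA.eigenvalues j ≤ t) (i : n) : -t ≤ hA.eigenvalues i := by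
  set v : n → ℝ := WithLp.ofLp (hA.eigenvectorBasis i)
  have hv : v ⬝ᵥ v = 1 := by
    have := real_inner_self_eq_norm_sq (hA.eigenvectorBasis i)
    rwa [hA.eigenvectorBasis.orthonormal.1 i, one_pow, EuclideanSpace.inner_eq_star_dotProduct,
      star_trivial] at this
  have habs : |v| ⬝ᵥ |v| = 1 := by
    rw [← hv]
    exact sum_congr rfl fun j _ => abs_mul_abs_self (v j)
  calc -t = -(t * (|v| ⬝ᵥ |v|)) := by rw [habs, mul_one]
    _ ≤ -(|v| ⬝ᵥ (A *ᵥ |v|)) := neg_le_neg (hA.dotProduct_mulVec_le ht |v|)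
    _ ≤ v ⬝ᵥ (A *ᵥ v) := neg_le_of_abs_le (abs_dotProduct_mulVec_le hA0 v v)
    _ = hA.eigenvalues i := by simpa [dotProduct_comm] using (hA.eigenvalues_eq i).symm

end IsHermitian

end Matrix

theorem sq_le_sum_sq_nonpos_of_sum_pow_three_eq_zero {ι : Type*} [Fintype ι] {μ : ι → ℝ}
    (h3 : ∑ i, μ i ^ 3 = 0) {i₀ : ι} (hmin : ∀ j, -μ i₀ ≤ μ j) :
    μ i₀ ^ 2 ≤ ∑ j ∈ univ.filter (fun j => μ j ≤ 0), μ j ^ 2 := by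
  set t := μ i₀
  set N := univ.filter (fun j => μ j ≤ 0)
  obtain ht | ht := (show 0 ≤ t by linarith [hmin i₀]).eq_or_lt
  · rw [← ht, zero_pow two_ne_zero]
    exact sum_nonneg fun j _ => sq_nonneg _
  have hsplit := sum_filter_add_sum_filter_not univ (fun j => 0 < μ j) (fun j => μ j ^ 3)
  simp only [not_lt, h3] at hsplit
  have key : t * t ^ 2 ≤ t * ∑ j ∈ N, μ j ^ 2 := calc
    t * t ^ 2 = t ^ 3 := by ring
    _ ≤ ∑ j ∈ univ.filter (fun j => 0 < μ j), μ j ^ 3 :=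
      single_le_sum (f := fun j => μ j ^ 3) (fun j hj => (pow_pos (mem_filter.mp hj).2 3).le)
        (mem_filter.mpr ⟨mem_univ _, ht⟩)
    _ = ∑ j ∈ N, -μ j * μ j ^ 2 := by
      simp only [neg_mul, ← pow_succ', sum_neg_distrib]
      linarith
    _ ≤ t * ∑ j ∈ N, μ j ^ 2 := by
      rw [mul_sum]
      exact sum_le_sum fun j _ => mul_le_mul_of_nonneg_right (by linarith [hmin j]) (sq_nonneg _)
  exact le_of_mul_le_mul_left key ht

namespace SimpleGraph

variable {V R : Type*} [Fintype V] (G : SimpleGraph V) [DecidableRel G.Adj]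

theorem one_dotProduct_adjMatrix_mulVec_one [NonAssocSemiring R] :
    1 ⬝ᵥ G.adjMatrix R *ᵥ 1 = 2 * #G.edgeFinset := by
  simp only [one_dotProduct, adjMatrix_mulVec_apply, Pi.one_apply, sum_const, nsmul_one,
    card_neighborFinset_eq_degree]
  rw [← Nat.cast_sum, sum_degrees_eq_twice_card_edges, Nat.cast_mul, Nat.cast_two]

theorem trace_adjMatrix_sq [DecidableEq V] [Semiring R] :
    (G.adjMatrix R ^ 2).trace = 2 * #G.edgeFinset := by
  simp only [sq, trace, diag_apply, adjMatrix_mul_self_apply_self]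
  rw [← Nat.cast_sum, sum_degrees_eq_twice_card_edges, Nat.cast_mul, Nat.cast_two]

variable {G}

theorem CliqueFree.trace_adjMatrix_pow_three [DecidableEq V] [Semiring R] (h : G.CliqueFree 3) :
    (G.adjMatrix R ^ 3).trace = 0 := by
  refine sum_eq_zero fun i _ => ?_
  rw [diag_apply, pow_succ', sq, adjMatrix_mul_apply]
  refine sum_eq_zero fun u hu => ?_
  rw [adjMatrix_mul_apply]
  refine sum_eq_zero fun w hw => ?_
  rw [mem_neighborFinset] at hu hw
  have hwi : ¬ G.Adj w i := fun hwi =>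
    h {i, u, w} (is3Clique_triple_iff.mpr ⟨hu, hwi.symm, hw⟩)
  simp [hwi]

end SimpleGraph

theorem triangle_free_sqrt_s_plus_le_half_card_general
    {V : Type*} [Fintype V] [DecidableEq V] (G : SimpleGraph V)
    [DecidableRel G.Adj]
    (hA : (G.adjMatrix ℝ).IsHermitian)
    (htf : G.CliqueFree 3) :
    Real.sqrt (∑ i ∈ univ.filter (fun i => 0 < hA.eigenvalues i),
        (hA.eigenvalues i) ^ 2) ≤ (Fintype.card V : ℝ) / 2 := by
  obtain hV | hV := isEmpty_or_nonempty V
  · simp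
  set μ := hA.eigenvalues
  obtain ⟨i₀, hmax⟩ := Finite.exists_max μ
  have hsq : ∑ i, μ i ^ 2 = 2 * #G.edgeFinset := by
    simpa using (hA.trace_pow 2).symm.trans G.trace_adjMatrix_sq
  have hcube : ∑ i, μ i ^ 3 = 0 := by
    simpa using (hA.trace_pow 3).symm.trans htf.trace_adjMatrix_pow_three
  have hedges : 2 * #G.edgeFinset ≤ μ i₀ * Fintype.card V := by
    simpa [G.one_dotProduct_adjMatrix_mulVec_one] using hA.dotProduct_mulVec_le hmax 1
  have hneg := hA.neg_le_eigenvalues_of_nonneg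
    (fun i j => by rw [G.adjMatrix_apply]; split_ifs <;> norm_num) hmax
  have hnonpos := sq_le_sum_sq_nonpos_of_sum_pow_three_eq_zero hcube hneg
  have hsplit := sum_filter_add_sum_filter_not univ (fun i => 0 < μ i) (fun i => μ i ^ 2)
  simp only [not_lt, hsq] at hsplit
  rw [Real.sqrt_le_left (by positivity)]
  nlinarith [sq_nonneg ((Fintype.card V : ℝ) / 2 - μ i₀)]

theorem triangle_free_sqrt_s_plus_le_half_card
    {V : Type*} [Fintype V] [DecidableEq V] (G : SimpleGraph V)
    [DecidableRel G.Adj]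
    (hA : (G.adjMatrix ℝ).IsHermitian)
    (htf : G.CliqueFree 3)
    (hedge : G.edgeFinset.Nonempty) :
    Real.sqrt (∑ i ∈ univ.filter (fun i => 0 < hA.eigenvalues i),
        (hA.eigenvalues i) ^ 2) ≤ (Fintype.card V : ℝ) / 2 :=
  triangle_free_sqrt_s_plus_le_half_card_general G hA htf
end

section
/- For any graph G, the spectral radius satisfies μ² ≤ 2m(ω − 1)/ω, where m is the number of edges and ω the clique number. -/
/-!
Write `μ = xᵀAx` for a unit eigenvector `x`. As a sum over the `2m` darts `(u, v)` of
`G`, Cauchy–Schwarz gives `μ² ≤ 2m · yᵀAy` with `y = (x_v²)_v`, a point of the standard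
simplex. The Motzkin–Straus bound `yᵀAy ≤ 1 - 1/ω` on the simplex finishes the proof: if the
support of `y` is not a clique, moving all the mass of a vertex `j` onto a non-neighbour `i`
with `(Ay)_i ≥ (Ay)_j` does not decrease `yᵀAy` and shrinks the support; once the support `S`
is a clique, `yᵀAy = 1 - ∑ y_v² ≤ 1 - 1/|S| ≤ 1 - 1/ω`.
-/

open Finset Matrix

namespace Matrix

variable {n R : Type*} [Fintype n] [DecidableEq n] [CommRing R]

theorem dotProduct_mulVec_add_smul_single_sub_single {A : Matrix n n R} (hA : A.IsSymm)
    {i j : n} (hii : A i i = 0) (hjj : A j j = 0) (hij : A i j = 0) (y : n → R) (t : R) :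
    (y + t • (Pi.single i 1 - Pi.single j 1)) ⬝ᵥ
        (A *ᵥ (y + t • (Pi.single i 1 - Pi.single j 1))) =
      y ⬝ᵥ (A *ᵥ y) + 2 * t * ((A *ᵥ y) i - (A *ᵥ y) j) := by
  set d : n → R := Pi.single i 1 - Pi.single j 1
  have hd (w : n → R) : d ⬝ᵥ w = w i - w j := by
    rw [sub_dotProduct, single_one_dotProduct, single_one_dotProduct]
  have hcomm (u w : n → R) : u ⬝ᵥ (A *ᵥ w) = w ⬝ᵥ (A *ᵥ u) := by
    rw [dotProduct_mulVec, ← mulVec_transpose, hA.eq, dotProduct_comm]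
  have hdd : d ⬝ᵥ (A *ᵥ d) = 0 := by
    have hji : A j i = 0 := by rw [← hA.apply j i]; exact hij
    simp [hd, d, mulVec_sub, hii, hjj, hij, hji]
  simp only [mulVec_add, mulVec_smul, dotProduct_add, add_dotProduct, dotProduct_smul,
    smul_dotProduct, hcomm y d, hdd, hd, smul_eq_mul]
  ring

end Matrix

namespace SimpleGraph

variable {V : Type*} [Fintype V] (G : SimpleGraph V) [DecidableRel G.Adj]

theorem sum_darts_eq_sum_sum_neighborFinset {M : Type*} [AddCommMonoid M] (f : V → V → M) :
    ∑ d : G.Dart, f d.fst d.snd = ∑ v, ∑ u ∈ G.neighborFinset v, f v u := by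
  let e : (Σ v, G.neighborSet v) ≃ G.Dart :=
    { toFun := fun s => ⟨(s.fst, s.snd), s.snd.property⟩
      invFun := fun d => ⟨d.fst, d.snd, d.adj⟩ }
  rw [← Fintype.sum_equiv e _ _ fun _ => rfl, Fintype.sum_sigma]
  refine sum_congr rfl fun v _ => ?_
  exact (sum_subtype _ (fun _ => G.mem_neighborFinset v _) (f v)).symm

theorem dotProduct_adjMatrix_mulVec_eq_sum_darts {R : Type*} [NonAssocSemiring R] (x : V → R) :
    x ⬝ᵥ (G.adjMatrix R *ᵥ x) = ∑ d : G.Dart, x d.fst * x d.snd := by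
  simp only [dotProduct, adjMatrix_mulVec_apply, mul_sum, ← sum_darts_eq_sum_sum_neighborFinset]

variable [DecidableEq V] {G}

theorem adjMatrix_mulVec_apply_of_isClique_support {R : Type*} [CommRing R] {y : V → R}
    (h : G.IsClique (Function.support y)) {v : V} (hv : y v ≠ 0) :
    (G.adjMatrix R *ᵥ y) v = ∑ u, y u - y v := by
  rw [adjMatrix_mulVec_apply, ← sum_erase_eq_sub (mem_univ v)]
  refine sum_subset (fun u hu => mem_erase.2
    ⟨(G.ne_of_adj ((G.mem_neighborFinset v u).1 hu)).symm, mem_univ u⟩) fun u hu hnu => ?_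
  by_contra hu0
  exact hnu ((G.mem_neighborFinset v u).2 (h hv hu0 (ne_of_mem_erase hu).symm))

theorem dotProduct_adjMatrix_mulVec_of_isClique_support {R : Type*} [CommRing R] {y : V → R}
    (h : G.IsClique (Function.support y)) :
    y ⬝ᵥ (G.adjMatrix R *ᵥ y) = (∑ v, y v) ^ 2 - ∑ v, y v ^ 2 :=
  calc y ⬝ᵥ (G.adjMatrix R *ᵥ y) = ∑ v, y v * (∑ u, y u - y v) := by
        refine sum_congr rfl fun v _ => ?_
        rcases eq_or_ne (y v) 0 with hv | hv
        · simp [hv]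
        · rw [adjMatrix_mulVec_apply_of_isClique_support h hv]
    _ = (∑ v, y v) ^ 2 - ∑ v, y v ^ 2 := by
        simp only [mul_sub, sum_sub_distrib, ← sum_mul, sq]

theorem dotProduct_adjMatrix_mulVec_le_of_isClique_support {y : V → ℝ}
    (hy : y ∈ stdSimplex ℝ V) (h : G.IsClique (Function.support y)) :
    y ⬝ᵥ (G.adjMatrix ℝ *ᵥ y) ≤ 1 - (G.cliqueNum : ℝ)⁻¹ := by
  set s : Finset V := {v | y v ≠ 0}
  have hs : ∑ v ∈ s, y v = 1 := by rw [sum_filter_ne_zero]; exact hy.2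
  have hsq : ∑ v ∈ s, y v ^ 2 = ∑ v, y v ^ 2 :=
    sum_filter_of_ne fun v _ hv => by simpa using hv
  have hpos : (0 : ℝ) < #s := by
    rw [Nat.cast_pos, card_pos]
    exact nonempty_of_sum_ne_zero (hs.trans_ne one_ne_zero)
  have hclique : G.IsClique (s : Set V) := by simpa [s, Function.support] using h
  have hcard : (#s : ℝ) ≤ G.cliqueNum := by exact_mod_cast hclique.card_le_cliqueNum
  have hCS : 1 ≤ #s * ∑ v ∈ s, y v ^ 2 := by
    simpa [hs] using sq_sum_le_card_mul_sum_sq (s := s) (f := y)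
  rw [dotProduct_adjMatrix_mulVec_of_isClique_support h, hy.2, ← hsq, one_pow,
    sub_le_sub_iff_left]
  calc (G.cliqueNum : ℝ)⁻¹ ≤ (#s : ℝ)⁻¹ := inv_anti₀ hpos hcard
    _ ≤ ∑ v ∈ s, y v ^ 2 := by rwa [inv_le_iff_one_le_mul₀' hpos]

theorem exists_mem_stdSimplex_card_support_lt_of_not_adj {y : V → ℝ} (hy : y ∈ stdSimplex ℝ V)
    {i j : V} (hi : y i ≠ 0) (hj : y j ≠ 0) (hne : i ≠ j) (hij : ¬G.Adj i j) :
    ∃ z ∈ stdSimplex ℝ V, #{v | z v ≠ 0} < #{v | y v ≠ 0} ∧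
      y ⬝ᵥ (G.adjMatrix ℝ *ᵥ y) ≤ z ⬝ᵥ (G.adjMatrix ℝ *ᵥ z) := by
  wlog hle : (G.adjMatrix ℝ *ᵥ y) j ≤ (G.adjMatrix ℝ *ᵥ y) i generalizing i j
  · exact this hj hi hne.symm (fun h => hij h.symm) (le_of_not_ge hle)
  set z := y + y j • (Pi.single i 1 - Pi.single j 1) with hz
  have hzi : z i = y i + y j := by simp [z, hne.symm]
  have hzj : z j = 0 := by simp [z, hne]
  have hzv (v : V) (hvi : v ≠ i) (hvj : v ≠ j) : z v = y v := by simp [z, hvi, hvj]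
  refine ⟨z, ⟨fun v => ?_, ?_⟩, card_lt_card ?_, ?_⟩
  · obtain rfl | hvi := eq_or_ne v i
    · rw [hzi]; exact add_nonneg (hy.1 v) (hy.1 j)
    obtain rfl | hvj := eq_or_ne v j
    · rw [hzj]
    rw [hzv v hvi hvj]; exact hy.1 v
  · simp [z, sum_add_distrib, ← mul_sum, hy.2]
  · refine (ssubset_iff_of_subset fun v => ?_).2 ⟨j, by simpa using hj, by simp [hzj]⟩
    simp only [mem_filter, mem_univ, true_and]
    obtain rfl | hvi := eq_or_ne v i
    · exact fun _ => hi
    obtain rfl | hvj := eq_or_ne v j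
    · exact fun h => absurd hzj h
    rw [hzv v hvi hvj]; exact id
  · rw [hz, dotProduct_mulVec_add_smul_single_sub_single G.isSymm_adjMatrix (by simp) (by simp)
      (by simp [hij])]
    exact le_add_of_nonneg_right
      (mul_nonneg (mul_nonneg zero_le_two (hy.1 j)) (sub_nonneg.2 hle))

theorem dotProduct_adjMatrix_mulVec_le_one_sub_inv_cliqueNum {y : V → ℝ}
    (hy : y ∈ stdSimplex ℝ V) : y ⬝ᵥ (G.adjMatrix ℝ *ᵥ y) ≤ 1 - (G.cliqueNum : ℝ)⁻¹ := by
  induction hn : #{v | y v ≠ 0} using Nat.strong_induction_on generalizing y with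
  | _ n ih =>
  by_cases hc : G.IsClique (Function.support y)
  · exact dotProduct_adjMatrix_mulVec_le_of_isClique_support hy hc
  obtain ⟨i, hi, j, hj, hne, hij⟩ : ∃ i, y i ≠ 0 ∧ ∃ j, y j ≠ 0 ∧ i ≠ j ∧ ¬G.Adj i j := by
    simpa [IsClique, Set.Pairwise] using hc
  obtain ⟨z, hz, hlt, hle⟩ :=
    exists_mem_stdSimplex_card_support_lt_of_not_adj hy hi hj hne hij
  exact hle.trans (ih _ (hn ▸ hlt) hz rfl)

theorem sq_dotProduct_adjMatrix_mulVec_le {x : V → ℝ} (hx : ∑ v, x v ^ 2 = 1) :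
    (x ⬝ᵥ (G.adjMatrix ℝ *ᵥ x)) ^ 2 ≤ 2 * #G.edgeFinset * (1 - (G.cliqueNum : ℝ)⁻¹) := by
  have hy : (fun v => x v ^ 2) ∈ stdSimplex ℝ V := ⟨fun v => sq_nonneg (x v), hx⟩
  calc (x ⬝ᵥ (G.adjMatrix ℝ *ᵥ x)) ^ 2 = (∑ d : G.Dart, x d.fst * x d.snd) ^ 2 := by
        rw [dotProduct_adjMatrix_mulVec_eq_sum_darts]
    _ ≤ Fintype.card G.Dart * ∑ d : G.Dart, (x d.fst * x d.snd) ^ 2 :=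
        sq_sum_le_card_mul_sum_sq
    _ = 2 * #G.edgeFinset * ((fun v => x v ^ 2) ⬝ᵥ (G.adjMatrix ℝ *ᵥ fun v => x v ^ 2)) := by
        simp only [dotProduct_adjMatrix_mulVec_eq_sum_darts, mul_pow,
          dart_card_eq_twice_card_edges]
        push_cast; rfl
    _ ≤ 2 * #G.edgeFinset * (1 - (G.cliqueNum : ℝ)⁻¹) := by
        gcongr; exact dotProduct_adjMatrix_mulVec_le_one_sub_inv_cliqueNum hy

end SimpleGraph

theorem spectral_radius_sq_le_general
    {V : Type*} [Fintype V] [DecidableEq V] (G : SimpleGraph V)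
    [DecidableRel G.Adj]
    (hA : (G.adjMatrix ℝ).IsHermitian)
    (μ : ℝ) (hmem : ∃ i, hA.eigenvalues i = μ) :
    μ ^ 2 ≤ 2 * (G.edgeFinset.card : ℝ) * ((G.cliqueNum : ℝ) - 1) / (G.cliqueNum : ℝ) := by
  obtain ⟨i, rfl⟩ := hmem
  have hx : ∑ v, hA.eigenvectorBasis i v ^ 2 = 1 := by
    rw [← EuclideanSpace.real_norm_sq_eq, hA.eigenvectorBasis.orthonormal.1 i, one_pow]
  have hQ : ⇑(hA.eigenvectorBasis i) ⬝ᵥ (G.adjMatrix ℝ *ᵥ ⇑(hA.eigenvectorBasis i)) =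
      hA.eigenvalues i := by
    rw [hA.mulVec_eigenvectorBasis, dotProduct_smul, smul_eq_mul, dotProduct]
    simp only [← sq, hx, mul_one]
  have hω : (0 : ℝ) < G.cliqueNum := by
    have : #{i} ≤ G.cliqueNum := SimpleGraph.IsClique.card_le_cliqueNum (tc := by simp)
    exact_mod_cast this
  rw [← hQ, mul_div_assoc, sub_div, div_self hω.ne', one_div]
  exact G.sq_dotProduct_adjMatrix_mulVec_le hx

theorem spectral_radius_sq_le
    {V : Type*} [Fintype V] [DecidableEq V] [Nonempty V] (G : SimpleGraph V)
    [DecidableRel G.Adj]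
    (hA : (G.adjMatrix ℝ).IsHermitian)
    (μ : ℝ) (hub : ∀ i, hA.eigenvalues i ≤ μ) (hmem : ∃ i, hA.eigenvalues i = μ) :
    μ ^ 2 ≤ 2 * (G.edgeFinset.card : ℝ) * ((G.cliqueNum : ℝ) - 1) / (G.cliqueNum : ℝ) :=
  spectral_radius_sq_le_general G hA μ hmem
end
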